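/- arXiv:2406.04060 — 4 statements merged into one kernel-verified Lean document; each statement's English description precedes it below -/
import Mathlib

section
/- Let G be a connected graph on n vertices with positive Laplacian eigenvalues λ_1,...,λ_{n-1} and corresponding orthonormal eigenvectors Ψ_1,...,Ψ_{n-1}, and let m > 1 be an integer. In the weighted cone graph C^m_G obtained from G by adding a new apex vertex b joined to every vertex of G by an edge of conductance m (resistance 1/m), with all edges of G having unit resistance, the effective resistance satisfies: R[u,v] = Σ_{k=1}^{n-1} (Ψ_{ku} − Ψ_{kv})²/(λ_k + m) for distinct u,v ∈ V(G), and R[u,b] = Σ_{k=1}^{n-1} Ψ_{ku}²/(λ_k + m) + 1/(nm) for u ∈ V(G). -/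
open Matrix Finset

open Classical in
/-- The Moore–Penrose pseudoinverse of a real square matrix, defined via the
four Penrose conditions (it is unique when it exists). -/
noncomputable def Matrix.mpinv {m : Type*} [Fintype m] [DecidableEq m]
    (A : Matrix m m ℝ) : Matrix m m ℝ :=
  if h : ∃ B : Matrix m m ℝ,
      A * B * A = A ∧ B * A * B = B ∧ (A * B)ᵀ = A * B ∧ (B * A)ᵀ = B * A
  then h.choose else 0

/-- Effective resistance between `u` and `v` with respect to a (weighted)
Laplacian matrix `L`:  `(e_u - e_v)ᵀ L⁺ (e_u - e_v)`. -/
noncomputable def effRes {m : Type*} [Fintype m] [DecidableEq m]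
    (L : Matrix m m ℝ) (u v : m) : ℝ :=
  (Pi.single u 1 - Pi.single v 1) ⬝ᵥ (L.mpinv *ᵥ (Pi.single u 1 - Pi.single v 1))

/-- The (real) Laplacian matrix of a simple graph. -/
noncomputable def lapm {V : Type*} [Fintype V] [DecidableEq V]
    (G : SimpleGraph V) : Matrix V V ℝ :=
  letI := Classical.decRel G.Adj
  G.lapMatrix ℝ

/-- Resistance distance between two vertices of a simple graph. -/
noncomputable def resDist {V : Type*} [Fintype V] [DecidableEq V]
    (G : SimpleGraph V) (u v : V) : ℝ :=
  effRes (lapm G) u v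

/-- Resistance diameter of a simple graph. -/
noncomputable def resDiam {V : Type*} [Fintype V] [DecidableEq V]
    (G : SimpleGraph V) : ℝ :=
  ⨆ p : V × V, resDist G p.1 p.2

/-- The weighted Laplacian of the cone over `G` with apex `Sum.inr ()`:
edges of `G` have conductance `1` (unit resistance), and each vertex of `G`
is joined to the apex by an edge of conductance `m` (resistance `1/m`). -/
noncomputable def coneLap {V : Type*} [Fintype V] [DecidableEq V]
    (G : SimpleGraph V) (m : ℝ) : Matrix (V ⊕ Unit) (V ⊕ Unit) ℝ :=
  letI := Classical.decRel G.Adj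
  let W : Matrix (V ⊕ Unit) (V ⊕ Unit) ℝ := fun i j =>
    match i, j with
    | Sum.inl a, Sum.inl b => if G.Adj a b then 1 else 0
    | Sum.inl _, Sum.inr _ => m
    | Sum.inr _, Sum.inl _ => m
    | Sum.inr _, Sum.inr _ => 0
  Matrix.of fun i j => (if i = j then ∑ k, W i k else 0) - W i j

/-- The `k`-dimensional hypercube graph `Q_k`. -/
def hypercube (k : ℕ) : SimpleGraph (Fin k → Bool) where
  Adj x y := (Finset.univ.filter fun i => x i ≠ y i).card = 1
  symm := by
    constructor
    intro x y h
    rw [← h]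
    congr 1
    ext i
    simp [ne_comm]
  loopless := by constructor; intro x; simp

/-- The join `G + H` of two graphs on disjoint vertex sets. -/
def graphJoin {V W : Type*} (G : SimpleGraph V) (H : SimpleGraph W) :
    SimpleGraph (V ⊕ W) where
  Adj x y :=
    match x, y with
    | Sum.inl a, Sum.inl b => G.Adj a b
    | Sum.inr a, Sum.inr b => H.Adj a b
    | Sum.inl _, Sum.inr _ => True
    | Sum.inr _, Sum.inl _ => True
  symm := by
    constructor
    rintro (a | a) (b | b) h
    · exact G.adj_symm h
    · trivial
    · trivial
    · exact H.adj_symm h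
  loopless := by
    constructor
    rintro (a | a) h
    · exact G.irrefl h
    · exact H.irrefl h

/-!
The cone Laplacian `L` is symmetric, so by the spectral theorem it has a Moore–Penrose inverse,
and whenever `L y = e_u - e_v` the Penrose identity `L L⁺ L = L` gives
`(e_u - e_v)ᵀ L⁺ (e_u - e_v) = yᵀ L y = y_u - y_v`: it suffices to exhibit potentials `y`.
The `n - 1` orthonormal eigenvectors `Ψ_k` are orthogonal to `1`, hence complete, so
`z_f = ∑ₖ ⟨Ψ_k, f⟩ / (λ_k + m) • Ψ_k` solves `(L_G + m) z_f = f - mean f` with `∑ z_f = 0`.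
Grounding the apex, `y = (z_f, 0)` with `f = e_u - e_v` works for a pair of vertices of `G`,
and `y = (z_{e_u} + 1 / (n m), 0)` for the pair `u, b`.
-/

namespace Matrix

variable {ι : Type*} [Fintype ι] [DecidableEq ι]

theorem IsSymm.exists_penrose {A : Matrix ι ι ℝ} (hA : A.IsSymm) :
    ∃ B : Matrix ι ι ℝ,
      A * B * A = A ∧ B * A * B = B ∧ (A * B)ᵀ = A * B ∧ (B * A)ᵀ = B * A := by
  have hH : A.IsHermitian := by
    rw [IsHermitian, conjTranspose_eq_transpose_of_trivial]; exact hA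
  set φ := Unitary.conjStarAlgAut ℝ _ hH.eigenvectorUnitary
  set d : ι → ℝ := RCLike.ofReal ∘ hH.eigenvalues
  have hφT : ∀ X, (φ X)ᵀ = φ Xᵀ := fun X => by
    simp only [← conjTranspose_eq_transpose_of_trivial, ← star_eq_conjTranspose, map_star]
  have hA' : A = φ (diagonal d) := hH.spectral_theorem
  -- since `0⁻¹ = 0`, `diagonal d⁻¹` is the pseudoinverse of `diagonal d`
  refine ⟨φ (diagonal d⁻¹), ?_, ?_, ?_, ?_⟩ <;>
    simp only [hA', ← map_mul, hφT, diagonal_mul_diagonal, diagonal_transpose]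
  · congr 2; ext i; exact mul_inv_mul_cancel (d i)
  · congr 2; ext i; simpa using mul_inv_mul_cancel (d i)⁻¹

theorem IsSymm.mul_mpinv_mul_self {A : Matrix ι ι ℝ} (hA : A.IsSymm) :
    A * A.mpinv * A = A := by
  rw [mpinv, dif_pos hA.exists_penrose]
  exact hA.exists_penrose.choose_spec.1

end Matrix

theorem effRes_eq_of_mulVec_eq {ι : Type*} [Fintype ι] [DecidableEq ι] {L : Matrix ι ι ℝ}
    (hL : L.IsSymm) {u v : ι} {y : ι → ℝ} (hy : L *ᵥ y = Pi.single u 1 - Pi.single v 1) :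
    effRes L u v = y u - y v := by
  calc effRes L u v = (L *ᵥ y) ⬝ᵥ (L.mpinv *ᵥ (L *ᵥ y)) := by rw [effRes, hy]
    _ = y ⬝ᵥ ((L * L.mpinv * L) *ᵥ y) := by
      rw [dotProduct_comm, dotProduct_mulVec, ← mulVec_transpose, hL.eq, dotProduct_comm,
        mulVec_mulVec, mulVec_mulVec]
    _ = y u - y v := by
      rw [hL.mul_mpinv_mul_self, hy, dotProduct_comm, sub_dotProduct, single_one_dotProduct,
        single_one_dotProduct]

theorem Matrix.sum_eq_zero_of_mulVec_eq_smul {V : Type*} [Fintype V] {A : Matrix V V ℝ}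
    (hA : A.IsSymm) (hA1 : A *ᵥ (fun _ => 1) = 0) {x : V → ℝ} {c : ℝ} (hc : c ≠ 0)
    (hx : A *ᵥ x = c • x) : ∑ u, x u = 0 := by
  have : c * ∑ u, x u = 0 := by
    calc c * ∑ u, x u = (fun _ => 1) ⬝ᵥ (A *ᵥ x) := by
          rw [hx, dotProduct_smul, smul_eq_mul, ← one_dotProduct]; rfl
      _ = 0 := by rw [dotProduct_mulVec, ← mulVec_transpose, hA.eq, hA1, zero_dotProduct]
  exact (mul_eq_zero.mp this).resolve_left hc

theorem sum_mul_eq_of_orthonormal_of_sum_eq_zero {ι V : Type*} [Fintype ι] [DecidableEq ι]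
    [Fintype V] [DecidableEq V] (hcard : Fintype.card V = Fintype.card ι + 1)
    {Ψ : ι → V → ℝ} (hOrth : ∀ k k', Ψ k ⬝ᵥ Ψ k' = if k = k' then 1 else 0)
    (hsum : ∀ k, ∑ u, Ψ k u = 0) (u v : V) :
    ∑ k, Ψ k u * Ψ k v = (if u = v then 1 else 0) - 1 / Fintype.card V := by
  have hV : (Fintype.card V : ℝ) ≠ 0 := by rw [hcard]; positivity
  -- `A * B = 1` is orthonormality of `1, Ψ`; the square case turns it into completeness `B * A = 1`
  let A : Matrix (Option ι) V ℝ := of fun o v => o.elim 1 (Ψ · v)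
  let B : Matrix V (Option ι) ℝ := of fun v o => o.elim (1 / Fintype.card V) (Ψ · v)
  have hAB : A * B = 1 := by
    ext (_ | k) (_ | k') <;>
      simp [A, B, mul_apply, one_apply, ← Finset.sum_mul, hsum, hV]
    simpa [dotProduct, Option.some_inj] using hOrth k k'
  have hBA := congrFun (congrFun ((mul_eq_one_comm_of_equiv
    (Fintype.equivOfCardEq (by simp [hcard]))).mp hAB) u) v
  simp only [mul_apply, Fintype.sum_option, A, B, of_apply, Option.elim, one_apply] at hBA
  linarith

section Cone

variable {V : Type*} [Fintype V] [DecidableEq V] (G : SimpleGraph V) (m : ℝ)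

theorem coneLap_inl_inl (a b : V) :
    coneLap G m (Sum.inl a) (Sum.inl b) = lapm G a b + if a = b then m else 0 := by
  classical
  by_cases h : a = b <;>
    simp [coneLap, lapm, Fintype.sum_sum_type, SimpleGraph.lapMatrix,
      SimpleGraph.degMatrix, SimpleGraph.adjMatrix_apply,
      SimpleGraph.degree_eq_sum_if_adj, h]

theorem coneLap_inl_inr (a : V) (t : Unit) : coneLap G m (Sum.inl a) (Sum.inr t) = -m := by
  simp [coneLap]

theorem coneLap_inr_inl (t : Unit) (b : V) : coneLap G m (Sum.inr t) (Sum.inl b) = -m := by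
  simp [coneLap]

theorem isSymm_lapm : (lapm G).IsSymm := by
  let := Classical.decRel G.Adj
  exact G.isSymm_lapMatrix ℝ

theorem isSymm_coneLap : (coneLap G m).IsSymm := by
  ext (a | t) (b | t')
  · simp only [transpose_apply, coneLap_inl_inl, (isSymm_lapm G).apply a b, eq_comm]
  all_goals simp [coneLap_inl_inr, coneLap_inr_inl]

theorem lapm_mulVec_const (c : ℝ) : lapm G *ᵥ (fun _ => c) = 0 := by
  let := Classical.decRel G.Adj
  have hc : (fun _ : V => c) = c • fun _ => (1 : ℝ) := by ext; simp
  rw [hc, mulVec_smul, lapm, G.lapMatrix_mulVec_const_eq_zero, smul_zero]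

theorem coneLap_mulVec_elim_zero (z : V → ℝ) :
    coneLap G m *ᵥ Sum.elim z 0 = Sum.elim (lapm G *ᵥ z + m • z) (fun _ => -(m * ∑ a, z a)) := by
  ext (a | t)
  · simp [mulVec, dotProduct, Fintype.sum_sum_type, coneLap_inl_inl, add_mul,
      Finset.sum_add_distrib]
  · simp [mulVec, dotProduct, Fintype.sum_sum_type, coneLap_inr_inl, Finset.mul_sum]

end Cone

section Resolvent

variable {ι V : Type*} [Fintype ι] [Fintype V]

noncomputable def spectralResolvent (lam : ι → ℝ) (Ψ : ι → V → ℝ) (s : ℝ) (f : V → ℝ) : V → ℝ :=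
  ∑ k, ((Ψ k ⬝ᵥ f) / (lam k + s)) • Ψ k

variable {lam : ι → ℝ} {Ψ : ι → V → ℝ}

theorem sum_spectralResolvent (hsum : ∀ k, ∑ u, Ψ k u = 0) (s : ℝ) (f : V → ℝ) :
    ∑ u, spectralResolvent lam Ψ s f u = 0 := by
  simp [spectralResolvent, Finset.sum_apply, Finset.sum_comm (γ := V), ← Finset.mul_sum, hsum]

theorem mulVec_spectralResolvent_add_smul [DecidableEq V] {L : Matrix V V ℝ}
    (hΨ : ∀ k, L *ᵥ Ψ k = lam k • Ψ k)
    (hcomp : ∀ u v, ∑ k, Ψ k u * Ψ k v = (if u = v then 1 else 0) - 1 / Fintype.card V)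
    {s : ℝ} (hs : ∀ k, lam k + s ≠ 0) (f : V → ℝ) :
    L *ᵥ spectralResolvent lam Ψ s f + s • spectralResolvent lam Ψ s f
      = f - fun _ => (∑ u, f u) / Fintype.card V := by
  ext v
  calc (L *ᵥ spectralResolvent lam Ψ s f + s • spectralResolvent lam Ψ s f) v
      = ∑ k, (Ψ k ⬝ᵥ f) * Ψ k v := by
        simp only [spectralResolvent, mulVec_sum, mulVec_smul, hΨ, Pi.add_apply, Pi.smul_apply,
          Finset.sum_apply, smul_eq_mul, Finset.mul_sum, ← Finset.sum_add_distrib]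
        refine Finset.sum_congr rfl fun k _ => ?_
        field_simp [hs k]
    _ = ∑ u, f u * ((if u = v then 1 else 0) - 1 / Fintype.card V) := by
        simp only [dotProduct, Finset.sum_mul, ← hcomp, Finset.mul_sum]
        rw [Finset.sum_comm]
        exact Finset.sum_congr rfl fun _ _ => Finset.sum_congr rfl fun _ _ => by ring
    _ = f v - (∑ u, f u) / Fintype.card V := by
        simp [mul_sub, Finset.sum_sub_distrib, ← Finset.sum_mul, div_eq_mul_one_div (∑ u, f u)]

end Resolvent

theorem effRes_cone_general (n : ℕ) (hn : 0 < n) (G : SimpleGraph (Fin n))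
    (m : ℕ) (hm : 1 < m)
    (lam : Fin (n - 1) → ℝ) (Psi : Fin (n - 1) → Fin n → ℝ)
    (hlam : ∀ k, 0 < lam k)
    (hPsi : ∀ k, lapm G *ᵥ Psi k = lam k • Psi k)
    (hOrth : ∀ k k', Psi k ⬝ᵥ Psi k' = if k = k' then 1 else 0) :
    (∀ u v : Fin n, u ≠ v →
      effRes (coneLap G m) (Sum.inl u) (Sum.inl v)
        = ∑ k : Fin (n - 1), (Psi k u - Psi k v) ^ 2 / (lam k + m)) ∧
    (∀ u : Fin n,
      effRes (coneLap G m) (Sum.inl u) (Sum.inr ())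
        = ∑ k : Fin (n - 1), (Psi k u) ^ 2 / (lam k + m) + 1 / (n * m)) := by
  have hm0 : (m : ℝ) ≠ 0 := Nat.cast_ne_zero.mpr (by omega)
  have hn0 : (n : ℝ) ≠ 0 := Nat.cast_ne_zero.mpr (by omega)
  have hsum (k) : ∑ u, Psi k u = 0 :=
    sum_eq_zero_of_mulVec_eq_smul (isSymm_lapm G) (lapm_mulVec_const G 1) (hlam k).ne' (hPsi k)
  have hcomp := sum_mul_eq_of_orthonormal_of_sum_eq_zero (V := Fin n) (by simp; omega) hOrth hsum
  have hR := mulVec_spectralResolvent_add_smul hPsi hcomp fun k =>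
    (add_pos_of_pos_of_nonneg (hlam k) m.cast_nonneg).ne'
  have hRsum := sum_spectralResolvent (lam := lam) hsum m
  simp only [Fintype.card_fin] at hR
  constructor
  · intro u v _
    have hy : coneLap G m *ᵥ Sum.elim (spectralResolvent lam Psi m
        (Pi.single u 1 - Pi.single v 1)) 0 = Pi.single (.inl u) 1 - Pi.single (.inl v) 1 := by
      rw [coneLap_mulVec_elim_zero, hR, hRsum]
      ext (a | t) <;> simp [Pi.single_apply]
    rw [effRes_eq_of_mulVec_eq (isSymm_coneLap G m) hy]
    simp only [spectralResolvent, dotProduct_sub, dotProduct_single, mul_one, Sum.elim_inl,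
      Finset.sum_apply, Pi.smul_apply, smul_eq_mul, ← Finset.sum_sub_distrib]
    exact Finset.sum_congr rfl fun k _ => by ring
  · intro u
    have hy : coneLap G m *ᵥ Sum.elim (spectralResolvent lam Psi m (Pi.single u 1)
        + fun _ => 1 / ((n : ℝ) * m)) 0 = Pi.single (.inl u) 1 - Pi.single (.inr ()) 1 := by
      rw [coneLap_mulVec_elim_zero, mulVec_add, lapm_mulVec_const, add_zero, smul_add,
        ← add_assoc, hR]
      ext (a | t)
      · simp [Pi.single_apply]; field_simp; ring
      · simp [Finset.sum_add_distrib, hRsum]; field_simp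
    rw [effRes_eq_of_mulVec_eq (isSymm_coneLap G m) hy]
    simp only [spectralResolvent, dotProduct_single, mul_one, Sum.elim_inl, Sum.elim_inr,
      Pi.add_apply, Pi.zero_apply, Finset.sum_apply, Pi.smul_apply, smul_eq_mul, sub_zero,
      add_left_inj]
    exact Finset.sum_congr rfl fun k _ => by ring

/-- Effective resistances in the weighted cone `C^m_G` over a connected graph `G`. -/
theorem effRes_cone (n : ℕ) (hn : 0 < n) (G : SimpleGraph (Fin n)) (hG : G.Connected)
    (m : ℕ) (hm : 1 < m)
    (lam : Fin (n - 1) → ℝ) (Psi : Fin (n - 1) → Fin n → ℝ)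
    (hlam : ∀ k, 0 < lam k)
    (hPsi : ∀ k, lapm G *ᵥ Psi k = lam k • Psi k)
    (hOrth : ∀ k k', Psi k ⬝ᵥ Psi k' = if k = k' then 1 else 0) :
    (∀ u v : Fin n, u ≠ v →
      effRes (coneLap G m) (Sum.inl u) (Sum.inl v)
        = ∑ k : Fin (n - 1), (Psi k u - Psi k v) ^ 2 / (lam k + m)) ∧
    (∀ u : Fin n,
      effRes (coneLap G m) (Sum.inl u) (Sum.inr ())
        = ∑ k : Fin (n - 1), (Psi k u) ^ 2 / (lam k + m) + 1 / (n * m)) :=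
  effRes_cone_general n hn G m hm lam Psi hlam hPsi hOrth
end

section
/- Let G and H be connected graphs on n and m vertices with positive Laplacian eigenvalues λ_1,...,λ_{n-1} and μ_1,...,μ_{m-1} and orthonormal eigenvectors Ψ_k, Φ_k respectively. In the join G+H, for u,v ∈ V(G): R_{G+H}[u,v] = Σ_{k=1}^{n-1} (Ψ_{ku} − Ψ_{kv})²/(λ_k + m); and for u ∈ V(G), w ∈ V(H): R_{G+H}[u,w] = Σ_{k=1}^{n-1} Ψ_{ku}²/(λ_k + m) + Σ_{k=1}^{m-1} Φ_{kw}²/(μ_k + n) + 1/(nm). -/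
open Matrix Finset

/-!
The Laplacian of `G + H` acts as `L_G + m` on `V(G)` and as `L_H + n` on `V(H)`, the two blocks
being coupled only through all-ones blocks. Hence `(Ψ_k, 0)` and `(0, Φ_k)` are eigenvectors with
eigenvalues `λ_k + m` and `μ_k + n`, the cut vector `(m 𝟙, -n 𝟙)` has eigenvalue `n + m`, and `𝟙`
has eigenvalue `0`. These `n + m` vectors are pairwise orthogonal, hence an eigenbasis, and the
pseudoinverse inverts the eigenvalues on it, so `(e_x - e_y)ᵀ L⁺ (e_x - e_y)` is the sum over the
basis of `(w x - w y)² / (c ‖w‖²)`.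
-/

section RankOneProjection
variable {V : Type*} [Fintype V]

noncomputable def rankOneProj (w : V → ℝ) : Matrix V V ℝ := (w ⬝ᵥ w)⁻¹ • vecMulVec w w

lemma rankOneProj_transpose (w : V → ℝ) : (rankOneProj w)ᵀ = rankOneProj w := by
  rw [rankOneProj, transpose_smul, transpose_vecMulVec]

lemma rankOneProj_mul_rankOneProj (v w : V → ℝ) :
    rankOneProj v * rankOneProj w = ((v ⬝ᵥ v)⁻¹ * (v ⬝ᵥ w) * (w ⬝ᵥ w)⁻¹) • vecMulVec v w := by
  rw [rankOneProj, rankOneProj, smul_mul_smul, vecMulVec_mul_vecMulVec, vecMulVec_smul,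
    smul_smul, mul_right_comm]

lemma rankOneProj_mul_self (w : V → ℝ) : rankOneProj w * rankOneProj w = rankOneProj w := by
  rw [rankOneProj_mul_rankOneProj, rankOneProj]
  congr 1
  simpa using mul_inv_mul_cancel (w ⬝ᵥ w)⁻¹

lemma rankOneProj_mul_of_dotProduct_eq_zero {v w : V → ℝ} (h : v ⬝ᵥ w = 0) :
    rankOneProj v * rankOneProj w = 0 := by
  rw [rankOneProj_mul_rankOneProj, h, mul_zero, zero_mul, zero_smul]

lemma mul_rankOneProj_of_mulVec_eq_smul {A : Matrix V V ℝ} {w : V → ℝ} {c : ℝ}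
    (h : A *ᵥ w = c • w) : A * rankOneProj w = c • rankOneProj w := by
  rw [rankOneProj, Matrix.mul_smul, mul_vecMulVec, h, smul_vecMulVec, smul_comm]

lemma dotProduct_rankOneProj_mulVec (w x : V → ℝ) :
    x ⬝ᵥ (rankOneProj w *ᵥ x) = (w ⬝ᵥ x) ^ 2 / (w ⬝ᵥ w) := by
  simp only [rankOneProj, smul_mulVec, vecMulVec_mulVec, dotProduct_smul]
  simp [dotProduct_comm x w, div_eq_inv_mul, sq, mul_comm]

/-- With `M` the matrix of rows `w t` and `D = diag (‖w t‖⁻²)`, orthogonality says `M (Mᵀ D) = 1`;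
as `M` is square, also `(Mᵀ D) M = 1`, which is the claim. -/
lemma sum_rankOneProj_eq_one [DecidableEq V] {ι : Type*} [Fintype ι] {w : ι → V → ℝ}
    (horth : Pairwise fun s t => w s ⬝ᵥ w t = 0) (hw : ∀ t, w t ≠ 0)
    (hcard : Fintype.card ι = Fintype.card V) : ∑ t, rankOneProj (w t) = 1 := by
  classical
  let M : Matrix ι V ℝ := Matrix.of w
  let N : Matrix V ι ℝ := Mᵀ * diagonal fun t => (w t ⬝ᵥ w t)⁻¹
  have hMN : M * N = 1 := by
    ext s t
    rw [← Matrix.mul_assoc, mul_diagonal, one_apply]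
    change (w s ⬝ᵥ w t) * _ = _
    rcases eq_or_ne s t with rfl | hst
    · exact if_pos rfl ▸ mul_inv_cancel₀ (dotProduct_self_eq_zero.not.mpr (hw s))
    · rw [horth hst, zero_mul, if_neg hst]
  have hNM : N * M = 1 := (mul_eq_one_comm_of_equiv (Fintype.equivOfCardEq hcard)).mp hMN
  rw [← hNM]
  ext i j
  simp only [N, M, rankOneProj, Matrix.sum_apply, Matrix.smul_apply, vecMulVec_apply, mul_apply,
    transpose_apply, of_apply, diagonal_apply, mul_ite, mul_zero, sum_ite_eq', mem_univ, if_true,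
    smul_eq_mul]
  exact sum_congr rfl fun t _ => by ring

end RankOneProjection

namespace Matrix
variable {V : Type*} [Fintype V]

lemma mul_eq_mul_of_penrose {A X Y : Matrix V V ℝ} (hX : A * X * A = A) (hY : A * Y * A = A)
    (hXs : (A * X)ᵀ = A * X) (hYs : (A * Y)ᵀ = A * Y) : A * X = A * Y :=
  calc A * X = (A * Y) * (A * X) := by rw [← Matrix.mul_assoc, hY]
    _ = ((A * X) * (A * Y))ᵀ := by rw [transpose_mul, hXs, hYs]
    _ = A * Y := by rw [← Matrix.mul_assoc, hX, hYs]

lemma mul_eq_mul_of_penrose' {A X Y : Matrix V V ℝ} (hX : A * X * A = A) (hY : A * Y * A = A)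
    (hXs : (X * A)ᵀ = X * A) (hYs : (Y * A)ᵀ = Y * A) : X * A = Y * A :=
  calc X * A = (X * A) * (Y * A) := by rw [Matrix.mul_assoc, ← Matrix.mul_assoc A, hY]
    _ = ((Y * A) * (X * A))ᵀ := by rw [transpose_mul, hXs, hYs]
    _ = Y * A := by rw [Matrix.mul_assoc, ← Matrix.mul_assoc A, hX, hYs]

lemma mpinv_eq_of_penrose [DecidableEq V] {A B : Matrix V V ℝ} (h₁ : A * B * A = A)
    (h₂ : B * A * B = B) (h₃ : (A * B)ᵀ = A * B) (h₄ : (B * A)ᵀ = B * A) : A.mpinv = B := by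
  have hex : ∃ C : Matrix V V ℝ,
      A * C * A = A ∧ C * A * C = C ∧ (A * C)ᵀ = A * C ∧ (C * A)ᵀ = C * A :=
    ⟨B, h₁, h₂, h₃, h₄⟩
  obtain ⟨k₁, k₂, k₃, k₄⟩ := hex.choose_spec
  rw [Matrix.mpinv, dif_pos hex]
  calc hex.choose = hex.choose * A * hex.choose := k₂.symm
    _ = B * A * B := by
      rw [mul_eq_mul_of_penrose' k₁ h₁ k₄ h₄, Matrix.mul_assoc, Matrix.mul_assoc,
        mul_eq_mul_of_penrose k₁ h₁ k₃ h₃]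
    _ = B := h₂

lemma sum_smul_mul_sum_smul {ι : Type*} [Fintype ι] [DecidableEq ι] {P : ι → Matrix V V ℝ}
    (hP : ∀ s t, P s * P t = if s = t then P s else 0) (a b : ι → ℝ) :
    (∑ t, a t • P t) * (∑ t, b t • P t) = ∑ t, (a t * b t) • P t := by
  simp_rw [Finset.sum_mul, Finset.mul_sum, smul_mul_smul, hP, smul_ite, smul_zero,
    Finset.sum_ite_eq, Finset.mem_univ, if_true]

/-- Since `0⁻¹ = 0`, this also covers zero coefficients, which the pseudoinverse leaves at zero. -/
lemma mpinv_sum_smul [DecidableEq V] {ι : Type*} [Fintype ι] [DecidableEq ι] {P : ι → Matrix V V ℝ}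
    (hP : ∀ s t, P s * P t = if s = t then P s else 0) (hPt : ∀ t, (P t)ᵀ = P t) (c : ι → ℝ) :
    (∑ t, c t • P t).mpinv = ∑ t, (c t)⁻¹ • P t := by
  have hsymm (a : ι → ℝ) : (∑ t, a t • P t)ᵀ = ∑ t, a t • P t := by
    simp [transpose_sum, hPt]
  apply mpinv_eq_of_penrose <;> simp only [sum_smul_mul_sum_smul hP, hsymm]
  · simp
  · have (x : ℝ) : x⁻¹ * x * x⁻¹ = x⁻¹ := by simpa using mul_inv_mul_cancel x⁻¹
    simp [this]

end Matrix

section OrthogonalEigenbasis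
variable {ι V : Type*} [Fintype ι] [Fintype V] [DecidableEq V] {A : Matrix V V ℝ}
  {w : ι → V → ℝ} {c : ι → ℝ}

lemma eq_sum_smul_rankOneProj (horth : Pairwise fun s t => w s ⬝ᵥ w t = 0) (hw : ∀ t, w t ≠ 0)
    (hcard : Fintype.card ι = Fintype.card V) (heig : ∀ t, A *ᵥ w t = c t • w t) :
    A = ∑ t, c t • rankOneProj (w t) :=
  calc A = A * ∑ t, rankOneProj (w t) := by
        rw [sum_rankOneProj_eq_one horth hw hcard, Matrix.mul_one]
    _ = ∑ t, c t • rankOneProj (w t) := by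
      simp_rw [Finset.mul_sum, mul_rankOneProj_of_mulVec_eq_smul (heig _)]

theorem effRes_eq_sum_of_orthogonal_eigenbasis (horth : Pairwise fun s t => w s ⬝ᵥ w t = 0)
    (hw : ∀ t, w t ≠ 0) (hcard : Fintype.card ι = Fintype.card V)
    (heig : ∀ t, A *ᵥ w t = c t • w t) (u v : V) :
    effRes A u v = ∑ t, (w t u - w t v) ^ 2 / (c t * (w t ⬝ᵥ w t)) := by
  classical
  have hP (s t : ι) :
      rankOneProj (w s) * rankOneProj (w t) = if s = t then rankOneProj (w s) else 0 := by
    split_ifs with h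
    · exact h ▸ rankOneProj_mul_self _
    · exact rankOneProj_mul_of_dotProduct_eq_zero (horth h)
  rw [effRes, eq_sum_smul_rankOneProj horth hw hcard heig,
    mpinv_sum_smul hP fun t => rankOneProj_transpose _]
  simp only [sum_mulVec, dotProduct_sum, smul_mulVec, dotProduct_smul,
    dotProduct_rankOneProj_mulVec, dotProduct_sub, dotProduct_single, mul_one]
  exact sum_congr rfl fun t _ => by ring

end OrthogonalEigenbasis

section Laplacian
variable {V W : Type*} [Fintype V] [DecidableEq V] [Fintype W] [DecidableEq W]

lemma lapm_mulVec_apply (G : SimpleGraph V) [DecidableRel G.Adj] (x : V → ℝ) (a : V) :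
    (lapm G *ᵥ x) a = ∑ b, if G.Adj a b then x a - x b else 0 := by
  rw [lapm, Subsingleton.elim (Classical.decRel G.Adj) ‹_›, SimpleGraph.lapMatrix_mulVec_apply,
    ← sum_filter, ← SimpleGraph.neighborFinset_eq_filter, sum_sub_distrib, sum_const,
    SimpleGraph.card_neighborFinset_eq_degree, nsmul_eq_mul]

lemma lapm_transpose (G : SimpleGraph V) : (lapm G)ᵀ = lapm G := by
  classical
  exact SimpleGraph.isSymm_lapMatrix ℝ G

lemma lapm_mulVec_one (G : SimpleGraph V) : lapm G *ᵥ 1 = 0 := by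
  classical
  ext a; simp [lapm_mulVec_apply]

lemma sum_eq_zero_of_lapm_mulVec_eq_smul (G : SimpleGraph V) {x : V → ℝ} {c : ℝ} (hc : c ≠ 0)
    (h : lapm G *ᵥ x = c • x) : ∑ a, x a = 0 := by
  have : c * ∑ a, x a = 0 :=
    calc c * ∑ a, x a = 1 ⬝ᵥ (lapm G *ᵥ x) := by simp [h, dotProduct, mul_sum]
      _ = 0 := by rw [dotProduct_mulVec, ← mulVec_transpose, lapm_transpose, lapm_mulVec_one,
        zero_dotProduct]
  exact (mul_eq_zero.mp this).resolve_left hc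

lemma lapm_graphJoin_mulVec (G : SimpleGraph V) (H : SimpleGraph W) (f : V → ℝ) (h : W → ℝ) :
    lapm (graphJoin G H) *ᵥ Sum.elim f h =
      Sum.elim (lapm G *ᵥ f + (Fintype.card W : ℝ) • f - fun _ => ∑ b, h b)
        (lapm H *ᵥ h + (Fintype.card V : ℝ) • h - fun _ => ∑ a, f a) := by
  classical
  ext (a | b) <;>
    simp [lapm_mulVec_apply, Fintype.sum_sum_type, graphJoin, sum_sub_distrib] <;> ring

end Laplacian

section Eigenbasis
variable {V W ι κ : Type*} [Fintype V] [Fintype W]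

noncomputable def joinEigvec (Psi : ι → V → ℝ) (Phi : κ → W → ℝ) :
    ι ⊕ κ ⊕ Unit ⊕ Unit → V ⊕ W → ℝ :=
  Sum.elim (fun k => Sum.elim (Psi k) 0) <| Sum.elim (fun k => Sum.elim 0 (Phi k)) <|
    Sum.elim (fun _ => Sum.elim ((Fintype.card W : ℝ) • 1) (-(Fintype.card V : ℝ) • 1))
      fun _ => Sum.elim 1 1

variable (V W) in
noncomputable def joinEigval (lam : ι → ℝ) (mu : κ → ℝ) : ι ⊕ κ ⊕ Unit ⊕ Unit → ℝ :=
  Sum.elim (fun k => lam k + Fintype.card W) <| Sum.elim (fun k => mu k + Fintype.card V) <|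
    Sum.elim (fun _ => Fintype.card V + Fintype.card W) 0

lemma joinEigvec_pairwise_orthogonal {Psi : ι → V → ℝ} {Phi : κ → W → ℝ}
    (hPsi : Pairwise fun k k' => Psi k ⬝ᵥ Psi k' = 0)
    (hPhi : Pairwise fun k k' => Phi k ⬝ᵥ Phi k' = 0)
    (hPsi_sum : ∀ k, ∑ a, Psi k a = 0) (hPhi_sum : ∀ k, ∑ b, Phi k b = 0) :
    Pairwise fun s t => joinEigvec Psi Phi s ⬝ᵥ joinEigvec Psi Phi t = 0 := by
  rintro (k | k | ⟨⟩ | ⟨⟩) (k' | k' | ⟨⟩ | ⟨⟩) hne <;>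
    simp_all [Pairwise, joinEigvec, sumElim_dotProduct_sumElim, dotProduct_one, one_dotProduct,
      -Sum.elim_one_one] <;> ring

lemma joinEigvec_ne_zero [Nonempty V] [Nonempty W] {Psi : ι → V → ℝ} {Phi : κ → W → ℝ}
    (hPsi : ∀ k, Psi k ≠ 0) (hPhi : ∀ k, Phi k ≠ 0) (t : ι ⊕ κ ⊕ Unit ⊕ Unit) :
    joinEigvec Psi Phi t ≠ 0 := by
  rcases t with k | k | _ | _
  · simpa [joinEigvec, funext_iff, Sum.forall] using hPsi k
  · simpa [joinEigvec, funext_iff, Sum.forall] using hPhi k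
  all_goals simp [joinEigvec, funext_iff, Sum.forall]

variable [DecidableEq V] [DecidableEq W]

lemma lapm_graphJoin_mulVec_joinEigvec (G : SimpleGraph V) (H : SimpleGraph W)
    {lam : ι → ℝ} {mu : κ → ℝ} {Psi : ι → V → ℝ} {Phi : κ → W → ℝ}
    (hPsi : ∀ k, lapm G *ᵥ Psi k = lam k • Psi k) (hPhi : ∀ k, lapm H *ᵥ Phi k = mu k • Phi k)
    (hPsi_sum : ∀ k, ∑ a, Psi k a = 0) (hPhi_sum : ∀ k, ∑ b, Phi k b = 0)
    (t : ι ⊕ κ ⊕ Unit ⊕ Unit) :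
    lapm (graphJoin G H) *ᵥ joinEigvec Psi Phi t =
      joinEigval V W lam mu t • joinEigvec Psi Phi t := by
  rcases t with k | k | _ | _ <;> ext (a | b) <;>
    simp [joinEigvec, joinEigval, lapm_graphJoin_mulVec, hPsi, hPhi, hPsi_sum, hPhi_sum,
      lapm_mulVec_one, mulVec_smul, mulVec_neg] <;> ring

end Eigenbasis

theorem resDist_join_general (n m : ℕ) (hn : 0 < n) (hm : 0 < m)
    (G : SimpleGraph (Fin n)) (H : SimpleGraph (Fin m))
    (lam : Fin (n - 1) → ℝ) (mu : Fin (m - 1) → ℝ)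
    (Psi : Fin (n - 1) → Fin n → ℝ) (Phi : Fin (m - 1) → Fin m → ℝ)
    (hlam : ∀ k, 0 < lam k) (hmu : ∀ k, 0 < mu k)
    (hPsi : ∀ k, lapm G *ᵥ Psi k = lam k • Psi k)
    (hPhi : ∀ k, lapm H *ᵥ Phi k = mu k • Phi k)
    (hPsiOrth : ∀ k k', Psi k ⬝ᵥ Psi k' = if k = k' then 1 else 0)
    (hPhiOrth : ∀ k k', Phi k ⬝ᵥ Phi k' = if k = k' then 1 else 0) :
    (∀ u v : Fin n,
      resDist (graphJoin G H) (Sum.inl u) (Sum.inl v)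
        = ∑ k : Fin (n - 1), (Psi k u - Psi k v) ^ 2 / (lam k + m)) ∧
    (∀ (u : Fin n) (w : Fin m),
      resDist (graphJoin G H) (Sum.inl u) (Sum.inr w)
        = ∑ k : Fin (n - 1), (Psi k u) ^ 2 / (lam k + m)
          + ∑ k : Fin (m - 1), (Phi k w) ^ 2 / (mu k + n) + 1 / (n * m)) := by
  have := Fin.pos_iff_nonempty.mp hn
  have := Fin.pos_iff_nonempty.mp hm
  have hPsi_sum k := sum_eq_zero_of_lapm_mulVec_eq_smul G (hlam k).ne' (hPsi k)
  have hPhi_sum k := sum_eq_zero_of_lapm_mulVec_eq_smul H (hmu k).ne' (hPhi k)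
  have hR (x y : Fin n ⊕ Fin m) := effRes_eq_sum_of_orthogonal_eigenbasis
    (joinEigvec_pairwise_orthogonal (fun k k' h => by simpa [h] using hPsiOrth k k')
      (fun k k' h => by simpa [h] using hPhiOrth k k') hPsi_sum hPhi_sum)
    (joinEigvec_ne_zero (fun k h => by simpa [h] using hPsiOrth k k)
      (fun k h => by simpa [h] using hPhiOrth k k))
    (by simp; omega) (lapm_graphJoin_mulVec_joinEigvec G H hPsi hPhi hPsi_sum hPhi_sum) x y
  refine ⟨fun u v => ?_, fun u w => ?_⟩
  · simp [resDist, hR, joinEigvec, joinEigval, Fintype.sum_sum_type, sumElim_dotProduct_sumElim,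
      hPsiOrth, hPhiOrth]
  · simp [resDist, hR, joinEigvec, joinEigval, Fintype.sum_sum_type, sumElim_dotProduct_sumElim,
      hPsiOrth, hPhiOrth]
    field_simp
    ring

/-- Resistance distances in the join `G + H` in terms of spectral data of the factors. -/
theorem resDist_join (n m : ℕ) (hn : 0 < n) (hm : 0 < m)
    (G : SimpleGraph (Fin n)) (H : SimpleGraph (Fin m))
    (hG : G.Connected) (hH : H.Connected)
    (lam : Fin (n - 1) → ℝ) (mu : Fin (m - 1) → ℝ)
    (Psi : Fin (n - 1) → Fin n → ℝ) (Phi : Fin (m - 1) → Fin m → ℝ)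
    (hlam : ∀ k, 0 < lam k) (hmu : ∀ k, 0 < mu k)
    (hPsi : ∀ k, lapm G *ᵥ Psi k = lam k • Psi k)
    (hPhi : ∀ k, lapm H *ᵥ Phi k = mu k • Phi k)
    (hPsiOrth : ∀ k k', Psi k ⬝ᵥ Psi k' = if k = k' then 1 else 0)
    (hPhiOrth : ∀ k k', Phi k ⬝ᵥ Phi k' = if k = k' then 1 else 0) :
    (∀ u v : Fin n,
      resDist (graphJoin G H) (Sum.inl u) (Sum.inl v)
        = ∑ k : Fin (n - 1), (Psi k u - Psi k v) ^ 2 / (lam k + m)) ∧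
    (∀ (u : Fin n) (w : Fin m),
      resDist (graphJoin G H) (Sum.inl u) (Sum.inr w)
        = ∑ k : Fin (n - 1), (Psi k u) ^ 2 / (lam k + m)
          + ∑ k : Fin (m - 1), (Phi k w) ^ 2 / (mu k + n) + 1 / (n * m)) :=
  resDist_join_general n m hn hm G H lam mu Psi Phi hlam hmu hPsi hPhi hPsiOrth hPhiOrth
end

section
/- For the weighted fan graphs C^m_{P_n} and C^m_{P_{n+1}} (m > 1 an integer), the apex-to-endpoint effective resistances satisfy 0 < R_{C^m_{P_n}}[a_1, b] − R_{C^m_{P_{n+1}}}[a_1, b] < 1/m^n. -/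
open Matrix Finset

/-!
Ground the apex and inject a unit current at `a₁`. The potentials along the path then satisfy
a second-order linear recurrence, so `R_n = w_n / (w_{n+1} - w_n)` where `w₀ = w₁ = 1` and
`w_{k+2} = (2 + m) w_{k+1} - w_k`. The Casoratian identity `w_k w_{k+2} - w_{k+1}² = m` gives
`R_n - R_{n+1} = m / ((w_{n+1} - w_n) (w_{n+2} - w_{n+1}))`, and the gaps `w_{k+1} - w_k` grow at
least like `m^k`.

The pseudoinverse is handled by the usual trick: if `L` is symmetric with kernel the constants and
`J = 11ᵀ/N`, then `(L + J)⁻¹ - J` satisfies the Penrose equations, so the effective resistance is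
the potential difference `x u - x v` of any solution of `L x = e_u - e_v`.
-/

open SimpleGraph

namespace Matrix

variable {K : Type*} [Fintype K]

def IsMoorePenroseInverse (A B : Matrix K K ℝ) : Prop :=
  A * B * A = A ∧ B * A * B = B ∧ (A * B)ᵀ = A * B ∧ (B * A)ᵀ = B * A

theorem IsMoorePenroseInverse.unique {A B C : Matrix K K ℝ}
    (hB : A.IsMoorePenroseInverse B) (hC : A.IsMoorePenroseInverse C) : B = C := by
  obtain ⟨hABA, hBAB, hAB, hBA⟩ := hB
  obtain ⟨hACA, hCAC, hAC, hCA⟩ := hC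
  have hAB_eq : A * B = A * C :=
    calc A * B = A * C * (A * B) := by rw [← Matrix.mul_assoc, hACA]
      _ = (A * B * (A * C))ᵀ := by rw [transpose_mul, hAC, hAB]
      _ = A * C := by rw [← Matrix.mul_assoc, hABA, hAC]
  have hBA_eq : B * A = C * A :=
    calc B * A = B * A * (C * A) := by rw [Matrix.mul_assoc, ← Matrix.mul_assoc A, hACA]
      _ = (C * A * (B * A))ᵀ := by rw [transpose_mul, hCA, hBA]
      _ = C * A := by rw [Matrix.mul_assoc, ← Matrix.mul_assoc A, hABA, hCA]
  calc B = B * A * B := hBAB.symm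
    _ = C * A * C := by rw [hBA_eq, Matrix.mul_assoc, hAB_eq, ← Matrix.mul_assoc]
    _ = C := hCAC

variable [DecidableEq K]

theorem IsMoorePenroseInverse.mpinv_eq {A B : Matrix K K ℝ} (h : A.IsMoorePenroseInverse B) :
    A.mpinv = B :=
  have hex : ∃ B, A.IsMoorePenroseInverse B := ⟨B, h⟩
  (dif_pos hex).trans (hex.choose_spec.unique h)

theorem isMoorePenroseInverse_inv_sub {L P A : Matrix K K ℝ} (hLPA : L + P = A) (hP : Pᵀ = P)
    (hPP : P * P = P) (hLP : L * P = 0) (hPL : P * L = 0) (hA : IsUnit A.det) :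
    L.IsMoorePenroseInverse (A⁻¹ - P) := by
  obtain rfl : L = A - P := eq_sub_of_add_eq hLPA
  have hAP : A * P = P := by rwa [Matrix.sub_mul, hPP, sub_eq_zero] at hLP
  have hPA : P * A = P := by rwa [Matrix.mul_sub, hPP, sub_eq_zero] at hPL
  have hAinvP : A⁻¹ * P = P := by
    conv_lhs => rw [← hAP, nonsing_inv_mul_cancel_left _ _ hA]
  have hPAinv : P * A⁻¹ = P := by
    conv_lhs => rw [← hPA, mul_nonsing_inv_cancel_right _ _ hA]
  have hLB : (A - P) * (A⁻¹ - P) = 1 - P := by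
    rw [Matrix.sub_mul, Matrix.mul_sub, Matrix.mul_sub, mul_nonsing_inv _ hA, hAP, hPAinv, hPP]
    abel
  have hBL : (A⁻¹ - P) * (A - P) = 1 - P := by
    rw [Matrix.sub_mul, Matrix.mul_sub, Matrix.mul_sub, nonsing_inv_mul _ hA, hPA, hAinvP, hPP]
    abel
  have hPB : P * (A⁻¹ - P) = 0 := by rw [Matrix.mul_sub, hPAinv, hPP, sub_self]
  refine ⟨?_, ?_, ?_, ?_⟩
  · rw [hLB, Matrix.sub_mul, Matrix.one_mul, hPL, sub_zero]
  · rw [hBL, Matrix.sub_mul, Matrix.one_mul, hPB, sub_zero]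
  · rw [hLB, transpose_sub, transpose_one, hP]
  · rw [hBL, transpose_sub, transpose_one, hP]

end Matrix

section ConstProj

variable {K : Type*} [Fintype K]

noncomputable def constProj (K : Type*) [Fintype K] : Matrix K K ℝ :=
  (Fintype.card K : ℝ)⁻¹ • vecMulVec 1 1

theorem constProj_mulVec (y : K → ℝ) :
    constProj K *ᵥ y = ((Fintype.card K : ℝ)⁻¹ * ∑ i, y i) • 1 := by
  rw [constProj, smul_mulVec, vecMulVec_mulVec, op_smul_eq_smul, one_dotProduct, smul_smul]

theorem transpose_constProj : (constProj K)ᵀ = constProj K := by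
  rw [constProj, transpose_smul, transpose_vecMulVec]

theorem constProj_mul_self [Nonempty K] : constProj K * constProj K = constProj K := by
  have hN : (Fintype.card K : ℝ) ≠ 0 := Nat.cast_ne_zero.2 Fintype.card_ne_zero
  rw [constProj, smul_mul_smul, vecMulVec_mul_vecMulVec, one_dotProduct_one, vecMulVec_smul,
    smul_smul, mul_assoc, inv_mul_cancel₀ hN, mul_one]

theorem mul_constProj {L : Matrix K K ℝ} (hL : L *ᵥ 1 = 0) : L * constProj K = 0 := by
  rw [constProj, Matrix.mul_smul, mul_vecMulVec, hL, zero_vecMulVec, smul_zero]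

theorem constProj_mul {L : Matrix K K ℝ} (hL : 1 ᵥ* L = 0) : constProj K * L = 0 := by
  rw [constProj, Matrix.smul_mul, vecMulVec_mul, hL, vecMulVec_zero, smul_zero]

variable [DecidableEq K]

theorem isUnit_det_add_constProj [Nonempty K] {L : Matrix K K ℝ} (hL : 1 ᵥ* L = 0)
    (hker : ∀ y, L *ᵥ y = 0 → ∃ c : ℝ, y = c • 1) : IsUnit (L + constProj K).det := by
  have hN : (Fintype.card K : ℝ) ≠ 0 := Nat.cast_ne_zero.2 Fintype.card_ne_zero
  rw [isUnit_iff_ne_zero, Ne, ← exists_mulVec_eq_zero_iff]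
  rintro ⟨y, hy0, hy⟩
  have hsum : ∑ i, y i = 0 := by
    have h1 := congrArg (1 ⬝ᵥ ·) hy
    simp only [add_mulVec, dotProduct_add, dotProduct_mulVec, hL, zero_dotProduct,
      constProj_mulVec, dotProduct_smul, one_dotProduct_one, dotProduct_zero, zero_add] at h1
    simpa [hN] using h1
  have hLy : L *ᵥ y = 0 := by
    rwa [add_mulVec, constProj_mulVec, hsum, mul_zero, zero_smul, add_zero] at hy
  obtain ⟨c, rfl⟩ := hker y hLy
  have hc : c = 0 := by simpa [hN] using hsum
  exact hy0 (by rw [hc, zero_smul])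

theorem effRes_eq_sub_of_mulVec_eq {L : Matrix K K ℝ} (hL : Lᵀ = L) (hL1 : L *ᵥ 1 = 0)
    (hker : ∀ y, L *ᵥ y = 0 → ∃ c : ℝ, y = c • 1) {u v : K} {x : K → ℝ}
    (hx : L *ᵥ x = Pi.single u 1 - Pi.single v 1) : effRes L u v = x u - x v := by
  have : Nonempty K := ⟨u⟩
  set d : K → ℝ := Pi.single u 1 - Pi.single v 1
  set P := constProj K
  have hL1' : 1 ᵥ* L = 0 := by rw [← mulVec_transpose, hL, hL1]
  have hA := isUnit_det_add_constProj hL1' hker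
  have hmpinv : L.mpinv = (L + P)⁻¹ - P :=
    (isMoorePenroseInverse_inv_sub rfl transpose_constProj constProj_mul_self
      (mul_constProj hL1) (constProj_mul hL1') hA).mpinv_eq
  have hPd : P *ᵥ d = 0 := by
    simp [P, d, constProj_mulVec, Finset.sum_sub_distrib]
  have hAx : (L + P) *ᵥ (x - P *ᵥ x) = d := by
    rw [mulVec_sub, add_mulVec, add_mulVec, mulVec_mulVec, mulVec_mulVec, mul_constProj hL1,
      constProj_mul_self, hx, zero_mulVec]
    abel
  have hBd : ((L + P)⁻¹ - P) *ᵥ d = x - P *ᵥ x := by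
    rw [sub_mulVec, hPd, sub_zero, ← hAx, mulVec_mulVec, nonsing_inv_mul _ hA, one_mulVec]
  rw [effRes, hmpinv, hBd, dotProduct_sub, dotProduct_mulVec, ← mulVec_transpose,
    transpose_constProj, hPd, zero_dotProduct, sub_zero]
  simp [sub_dotProduct]

end ConstProj

section WeightedLap

variable {K : Type*} [Fintype K] [DecidableEq K]

noncomputable def weightedLap (W : Matrix K K ℝ) : Matrix K K ℝ :=
  diagonal (fun i => ∑ j, W i j) - W

theorem weightedLap_mulVec_apply (W : Matrix K K ℝ) (x : K → ℝ) (i : K) :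
    (weightedLap W *ᵥ x) i = ∑ j, W i j * (x i - x j) := by
  rw [weightedLap, sub_mulVec, Pi.sub_apply, mulVec_diagonal]
  simp [mulVec, dotProduct, mul_sub, Finset.sum_mul]

theorem weightedLap_mulVec_one (W : Matrix K K ℝ) : weightedLap W *ᵥ 1 = 0 := by
  ext i
  simp [weightedLap_mulVec_apply]

theorem transpose_weightedLap {W : Matrix K K ℝ} (hW : Wᵀ = W) :
    (weightedLap W)ᵀ = weightedLap W := by
  rw [weightedLap, transpose_sub, diagonal_transpose, hW]

theorem eq_of_weightedLap_mulVec_eq_zero {W : Matrix K K ℝ} (hW : ∀ i j, 0 ≤ W i j)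
    {x : K → ℝ} (hx : weightedLap W *ᵥ x = 0) {i j : K} (hmax : ∀ k, x k ≤ x i)
    (hij : 0 < W i j) : x j = x i := by
  have hterms : ∀ k ∈ Finset.univ, 0 ≤ W i k * (x i - x k) :=
    fun k _ => mul_nonneg (hW i k) (sub_nonneg.2 (hmax k))
  have hsum : ∑ k, W i k * (x i - x k) = 0 := by
    rw [← weightedLap_mulVec_apply, hx, Pi.zero_apply]
  have hj := (Finset.sum_eq_zero_iff_of_nonneg hterms).1 hsum j (mem_univ j)
  linarith [(mul_eq_zero.1 hj).resolve_left hij.ne']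

end WeightedLap

section Cone

variable {V : Type*} (G : SimpleGraph V) {M : ℝ}

noncomputable def coneWeight (G : SimpleGraph V) (M : ℝ) : Matrix (V ⊕ Unit) (V ⊕ Unit) ℝ :=
  letI := Classical.decRel G.Adj
  fromBlocks (G.adjMatrix ℝ) (of fun _ _ => M) (of fun _ _ => M) 0

theorem transpose_coneWeight (M : ℝ) : (coneWeight G M)ᵀ = coneWeight G M := by
  rw [coneWeight, fromBlocks_transpose, transpose_adjMatrix, transpose_zero]
  rfl

theorem coneWeight_nonneg (hM : 0 ≤ M) (i j : V ⊕ Unit) : 0 ≤ coneWeight G M i j := by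
  classical
  rcases i with a | _ <;> rcases j with b | _ <;>
    simp [coneWeight, adjMatrix_apply, hM]
  split_ifs <;> norm_num

variable [Fintype V] [DecidableEq V]

theorem coneLap_eq_weightedLap (M : ℝ) : coneLap G M = weightedLap (coneWeight G M) := by
  classical
  ext (a | _) (b | _) <;>
    simp [coneLap, weightedLap, coneWeight, Fintype.sum_sum_type, diagonal_apply]

theorem coneLap_mulVec_eq_zero (hM : 0 < M) {x : V ⊕ Unit → ℝ} (hx : coneLap G M *ᵥ x = 0) :
    ∃ c : ℝ, x = c • 1 := by
  rw [coneLap_eq_weightedLap] at hx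
  have hharm : ∀ {i j}, (∀ k, x k ≤ x i) → 0 < coneWeight G M i j → x j = x i :=
    eq_of_weightedLap_mulVec_eq_zero (coneWeight_nonneg G hM.le) hx
  obtain ⟨i₀, hi₀⟩ := Finite.exists_max x
  have hapex : ∀ k, x k ≤ x (Sum.inr ()) := by
    rcases i₀ with a | ⟨⟩
    · rwa [hharm hi₀ (by simpa [coneWeight] using hM)]
    · exact hi₀
  refine ⟨x (Sum.inr ()), funext fun k => ?_⟩
  rcases k with a | ⟨⟩
  · simpa using hharm hapex (j := Sum.inl a) (by simpa [coneWeight] using hM)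
  · simp

end Cone

theorem sum_pathGraph_adjMatrix_mul {n : ℕ} [DecidableRel (pathGraph n).Adj] (j : Fin n)
    (g : ℕ → ℝ) :
    ∑ a : Fin n, (pathGraph n).adjMatrix ℝ j a * g a
      = (if (j : ℕ) + 1 < n then g (j + 1) else 0) + (if 0 < (j : ℕ) then g (j - 1) else 0) := by
  have hadj : ∀ a : Fin n, (pathGraph n).adjMatrix ℝ j a * g a
      = (if (j : ℕ) + 1 = a then g a else 0) + (if (a : ℕ) + 1 = j then g a else 0) := by
    intro a
    rw [adjMatrix_apply]
    split_ifs with h <;> rw [pathGraph_adj] at h <;> first | (exfalso; omega) | ring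
  rw [Finset.sum_congr rfl fun a _ => hadj a, Finset.sum_add_distrib,
    Fin.sum_univ_eq_sum_range (fun k => if (j : ℕ) + 1 = k then g k else 0),
    Fin.sum_univ_eq_sum_range (fun k => if k + 1 = (j : ℕ) then g k else 0),
    Finset.sum_ite_eq, if_congr Finset.mem_range rfl rfl]
  congr 1
  split_ifs with hj
  · rw [Finset.sum_eq_single ((j : ℕ) - 1)] <;> intros <;> simp_all <;> omega
  · exact Finset.sum_eq_zero fun k _ => if_neg (by omega)

section FanSeq

/-- Up to scale, `fanSeq M (n - j)` is the potential of vertex `j` of the fan over `P_n` with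
grounded apex; `fanSeq M 0 = fanSeq M 1` models a ghost vertex beyond the free end of the path. -/
noncomputable def fanSeq (M : ℝ) : ℕ → ℝ
  | 0 => 1
  | 1 => 1
  | k + 2 => (2 + M) * fanSeq M (k + 1) - fanSeq M k

variable (M : ℝ)

@[simp] theorem fanSeq_zero : fanSeq M 0 = 1 := rfl

@[simp] theorem fanSeq_one : fanSeq M 1 = 1 := rfl

theorem fanSeq_add_two (k : ℕ) :
    fanSeq M (k + 2) = (2 + M) * fanSeq M (k + 1) - fanSeq M k := rfl

theorem fanSeq_casoratian (k : ℕ) :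
    fanSeq M k * fanSeq M (k + 2) - fanSeq M (k + 1) ^ 2 = M := by
  induction k with
  | zero => rw [fanSeq_add_two, fanSeq_zero, fanSeq_one]; ring
  | succ k ih =>
    rw [fanSeq_add_two M (k + 1)]
    linear_combination ih - fanSeq M (k + 2) * fanSeq_add_two M k

theorem mul_sum_fanSeq (n : ℕ) :
    M * ∑ k ∈ range n, fanSeq M (k + 1) = fanSeq M (n + 1) - fanSeq M n := by
  induction n with
  | zero => simp
  | succ n ih => rw [Finset.sum_range_succ, mul_add, ih, fanSeq_add_two]; ring

variable {M}

theorem one_le_fanSeq_and_fanSeq_le_succ (hM : 0 ≤ M) (k : ℕ) :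
    1 ≤ fanSeq M k ∧ fanSeq M k ≤ fanSeq M (k + 1) := by
  induction k with
  | zero => simp
  | succ k ih =>
    obtain ⟨h1, h2⟩ := ih
    refine ⟨h1.trans h2, ?_⟩
    rw [fanSeq_add_two]
    nlinarith

theorem pow_le_fanSeq_succ_sub (hM : 0 ≤ M) {k : ℕ} (hk : 1 ≤ k) :
    M ^ k ≤ fanSeq M (k + 1) - fanSeq M k := by
  induction k, hk using Nat.le_induction with
  | base => rw [fanSeq_add_two, fanSeq_zero, fanSeq_one]; linarith
  | succ k _ ih =>
    obtain ⟨hw, hgap⟩ := one_le_fanSeq_and_fanSeq_le_succ hM k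
    have hgap' : fanSeq M (k + 2) - fanSeq M (k + 1)
        = M * fanSeq M (k + 1) + (fanSeq M (k + 1) - fanSeq M k) := by
      rw [fanSeq_add_two]; ring
    rw [hgap', pow_succ']
    nlinarith

end FanSeq

section Fan

variable {n : ℕ} {M : ℝ}

noncomputable def fanPotential (n : ℕ) (M : ℝ) : Fin n ⊕ Unit → ℝ :=
  Sum.elim (fun j => fanSeq M (n - j)) 0

theorem coneLap_pathGraph_mulVec_fanPotential (hn : 0 < n) :
    coneLap (pathGraph n) M *ᵥ fanPotential n M
      = (fanSeq M (n + 1) - fanSeq M n) •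
          (Pi.single (Sum.inl ⟨0, hn⟩) 1 - Pi.single (Sum.inr ()) 1) := by
  classical
  ext (j | ⟨⟩) <;>
    simp only [coneLap_eq_weightedLap, weightedLap_mulVec_apply, Fintype.sum_sum_type,
      coneWeight, fromBlocks_apply₁₁, fromBlocks_apply₁₂, fromBlocks_apply₂₁, fromBlocks_apply₂₂,
      of_apply, fanPotential, Sum.elim_inl, Sum.elim_inr, Pi.zero_apply, Pi.smul_apply,
      Pi.sub_apply, smul_eq_mul, Fintype.sum_unique]
  · set f : ℕ → ℝ := fun k => fanSeq M (n - k)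
    rw [sum_pathGraph_adjMatrix_mul j (fun k => f j - f k)]
    have hlast : (if (j : ℕ) + 1 < n then f j - f (j + 1) else 0) = f j - f (j + 1) := by
      split_ifs with h
      · rfl
      · simp only [f, show n - j = 1 by omega, show n - (j + 1) = 0 by omega, fanSeq_zero,
          fanSeq_one, sub_self]
    rw [hlast]
    rcases Nat.eq_zero_or_pos (j : ℕ) with hj | hj
    · obtain ⟨k, rfl⟩ : ∃ k, n = k + 1 := ⟨n - 1, by omega⟩
      have hj' : j = ⟨0, hn⟩ := Fin.ext hj
      simp [f, hj', fanSeq_add_two]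
      ring
    · obtain ⟨k, hk⟩ : ∃ k, n - j = k + 1 := ⟨n - j - 1, by omega⟩
      have hj' : j ≠ ⟨0, hn⟩ := fun h => by simp [h] at hj
      simp only [f, hk, if_pos hj, show n - (j + 1) = k by omega,
        show n - (j - 1) = k + 2 by omega, fanSeq_add_two]
      simp [hj']
      ring
  · have hsum : ∑ a : Fin n, fanSeq M (n - a) = ∑ k ∈ range n, fanSeq M (k + 1) := by
      rw [Fin.sum_univ_eq_sum_range (fun k => fanSeq M (n - k)), ← Finset.sum_range_reflect]
      exact Finset.sum_congr rfl fun k hk => by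
        rw [show n - (n - 1 - k) = k + 1 by have := mem_range.1 hk; omega]
    simp only [zero_sub, mul_neg, Finset.sum_neg_distrib, ← Finset.mul_sum, hsum, mul_sum_fanSeq]
    simp

theorem effRes_coneLap_pathGraph (hn : 0 < n) (hM : 0 < M) :
    effRes (coneLap (pathGraph n) M) (Sum.inl ⟨0, hn⟩) (Sum.inr ())
      = fanSeq M n / (fanSeq M (n + 1) - fanSeq M n) := by
  have hgap : 0 < fanSeq M (n + 1) - fanSeq M n :=
    (pow_pos hM n).trans_le (pow_le_fanSeq_succ_sub hM.le hn)
  have hsymm : (coneLap (pathGraph n) M)ᵀ = coneLap (pathGraph n) M := by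
    rw [coneLap_eq_weightedLap]
    exact transpose_weightedLap (transpose_coneWeight _ _)
  rw [effRes_eq_sub_of_mulVec_eq hsymm (by rw [coneLap_eq_weightedLap, weightedLap_mulVec_one])
    (fun _ => coneLap_mulVec_eq_zero _ hM)
    (x := (fanSeq M (n + 1) - fanSeq M n)⁻¹ • fanPotential n M)]
  · simp [fanPotential, div_eq_inv_mul]
  · rw [mulVec_smul, coneLap_pathGraph_mulVec_fanPotential hn, smul_smul,
      inv_mul_cancel₀ hgap.ne', one_smul]

theorem effRes_coneLap_pathGraph_sub_succ (hn : 0 < n) (hM : 0 < M) :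
    effRes (coneLap (pathGraph n) M) (Sum.inl ⟨0, hn⟩) (Sum.inr ())
        - effRes (coneLap (pathGraph (n + 1)) M) (Sum.inl ⟨0, n.succ_pos⟩) (Sum.inr ())
      = M / ((fanSeq M (n + 1) - fanSeq M n) * (fanSeq M (n + 2) - fanSeq M (n + 1))) := by
  have hgap₁ := (pow_pos hM n).trans_le (pow_le_fanSeq_succ_sub hM.le hn)
  have hgap₂ := (pow_pos hM (n + 1)).trans_le (pow_le_fanSeq_succ_sub hM.le n.succ_pos)
  rw [effRes_coneLap_pathGraph hn hM, effRes_coneLap_pathGraph n.succ_pos hM,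
    div_sub_div _ _ hgap₁.ne' hgap₂.ne']
  congr 1
  linear_combination fanSeq_casoratian M n

end Fan

/-- Asymptotics of apex-to-endpoint effective resistances in weighted fan graphs. -/
theorem effRes_fan_apex_diff (n m : ℕ) (hn : 1 ≤ n) (hm : 1 < m) :
    0 < effRes (coneLap (SimpleGraph.pathGraph n) m)
          (Sum.inl ⟨0, by omega⟩) (Sum.inr ())
        - effRes (coneLap (SimpleGraph.pathGraph (n + 1)) m)
            (Sum.inl ⟨0, by omega⟩) (Sum.inr ())
    ∧ effRes (coneLap (SimpleGraph.pathGraph n) m)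
          (Sum.inl ⟨0, by omega⟩) (Sum.inr ())
        - effRes (coneLap (SimpleGraph.pathGraph (n + 1)) m)
            (Sum.inl ⟨0, by omega⟩) (Sum.inr ())
      < 1 / m ^ n := by
  have hM : (1 : ℝ) < m := by exact_mod_cast hm
  have hM₀ : (0 : ℝ) < m := one_pos.trans hM
  rw [effRes_coneLap_pathGraph_sub_succ hn hM₀]
  have hgap₁ : (m : ℝ) ^ n ≤ fanSeq m (n + 1) - fanSeq m n := pow_le_fanSeq_succ_sub hM₀.le hn
  have hgap₂ : (m : ℝ) ^ (n + 1) ≤ fanSeq m (n + 2) - fanSeq m (n + 1) :=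
    pow_le_fanSeq_succ_sub hM₀.le n.succ_pos
  have hpow : (0 : ℝ) < m ^ n := pow_pos hM₀ n
  refine ⟨div_pos hM₀ (mul_pos (hpow.trans_le hgap₁) ((pow_pos hM₀ _).trans_le hgap₂)), ?_⟩
  calc (m : ℝ) / ((fanSeq m (n + 1) - fanSeq m n) * (fanSeq m (n + 2) - fanSeq m (n + 1)))
      ≤ m / (m ^ n * m ^ (n + 1)) := by gcongr; exact hpow.le.trans hgap₁
    _ = 1 / (m ^ n * m ^ n) := by field_simp; ring
    _ < 1 / m ^ n :=
      one_div_lt_one_div_of_lt hpow (lt_mul_of_one_lt_right hpow (one_lt_pow₀ hM (by omega)))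
end

section
/- Let G_n = P_n □ C_4 be the block tower graph, the Cartesian product of the path P_n = a_1...a_n with the 4-cycle C_4 = b_1b_2b_3b_4b_1. Then lim_{n→∞} (R_{G_{n+1}}[(a_1,b_1),(a_{n+1},b_3)] − R_{G_n}[(a_1,b_1),(a_n,b_3)]) = 1/4. -/
open Matrix Finset

/-!
The resistance between `u` and `v` is `y u - y v` for any potential `y` with
`L y = e_u - e_v`, because `L L⁺ L = L`. On `P_n □ C₄` such a potential is found by separating
variables along the eigenvectors `1`, `(1, 0, -1, 0)`, `(1, -1, 1, -1)` of the Laplacian of `C₄`,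
with eigenvalues `μ = 0, 2, 4`. The profile of each component along the path satisfies
`f (k - 1) + f (k + 1) = (2 + μ) f k` and has prescribed flux at the two ends, so it is linear
for `μ = 0` and a combination of `r ^ k` and `r ^ (n - 1 - k)`, where `r + r⁻¹ = 2 + μ`,
otherwise. The linear component contributes `(n - 1) / 4` to the resistance and the other two
converge as `n → ∞`, so the successive differences tend to `1 / 4`.
-/

open SimpleGraph Filter Topology

/-- The pseudoinverse of `U D Uᵀ` is `U D⁻¹ Uᵀ`, where `D⁻¹` inverts the nonzero eigenvalues
(`0⁻¹ = 0` in `ℝ`). -/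
theorem Matrix.IsHermitian.exists_penrose {n : Type*} [Fintype n] [DecidableEq n]
    {A : Matrix n n ℝ} (hA : A.IsHermitian) :
    ∃ B : Matrix n n ℝ,
      A * B * A = A ∧ B * A * B = B ∧ (A * B)ᵀ = A * B ∧ (B * A)ᵀ = B * A := by
  obtain ⟨U, d, hUU, rfl⟩ : ∃ (U : Matrix n n ℝ) (d : n → ℝ),
      Uᵀ * U = 1 ∧ A = U * diagonal d * Uᵀ := by
    refine ⟨hA.eigenvectorUnitary, hA.eigenvalues, ?_, ?_⟩
    · simpa [star_eq_conjTranspose] using mem_unitaryGroup_iff'.mp hA.eigenvectorUnitary.2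
    · simpa [star_eq_conjTranspose, RCLike.ofReal_real_eq_id] using hA.spectral_theorem
  have conj_mul_conj (X Y : Matrix n n ℝ) : U * X * Uᵀ * (U * Y * Uᵀ) = U * (X * Y) * Uᵀ := by
    simp only [Matrix.mul_assoc, ← Matrix.mul_assoc Uᵀ U, hUU, Matrix.one_mul]
  have transpose_conj (X : Matrix n n ℝ) : (U * X * Uᵀ)ᵀ = U * Xᵀ * Uᵀ := by
    rw [transpose_mul, transpose_mul, transpose_transpose, Matrix.mul_assoc]
  refine ⟨U * diagonal d⁻¹ * Uᵀ, ?_, ?_, ?_, ?_⟩ <;>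
    simp only [conj_mul_conj, transpose_conj, diagonal_mul_diagonal, diagonal_transpose] <;>
    congr 3 <;> funext i <;> rcases eq_or_ne (d i) 0 with h | h <;> simp [h, mul_comm]

theorem effRes_eq_sub_of_mulVec_eq_s13 {m : Type*} [Fintype m] [DecidableEq m] {L : Matrix m m ℝ}
    (hL : L.IsHermitian) {u v : m} {y : m → ℝ}
    (hy : L *ᵥ y = Pi.single u 1 - Pi.single v 1) : effRes L u v = y u - y v := by
  have hpinv : L * L.mpinv * L = L := by
    rw [Matrix.mpinv, dif_pos hL.exists_penrose]
    exact hL.exists_penrose.choose_spec.1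
  have hLT : Lᵀ = L := by rwa [← conjTranspose_eq_transpose_of_trivial]
  calc effRes L u v = (L *ᵥ y) ⬝ᵥ (L.mpinv *ᵥ (L *ᵥ y)) := by rw [effRes, hy]
    _ = y ⬝ᵥ ((L * L.mpinv * L) *ᵥ y) := by
      rw [dotProduct_comm, dotProduct_mulVec, ← mulVec_transpose, hLT, mulVec_mulVec,
        mulVec_mulVec, dotProduct_comm]
    _ = y u - y v := by
      rw [hpinv, hy, dotProduct_sub, dotProduct_single, dotProduct_single, mul_one, mul_one]

namespace SimpleGraph

theorem lapm_eq_lapMatrix {V : Type*} [Fintype V] [DecidableEq V] (G : SimpleGraph V)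
    [DecidableRel G.Adj] : lapm G = G.lapMatrix ℝ := by
  unfold lapm
  congr

theorem resDist_eq_sub_of_lapMatrix_mulVec_eq {V : Type*} [Fintype V] [DecidableEq V]
    {G : SimpleGraph V} [DecidableRel G.Adj] {u v : V} {y : V → ℝ}
    (hy : G.lapMatrix ℝ *ᵥ y = Pi.single u 1 - Pi.single v 1) : resDist G u v = y u - y v := by
  rw [resDist, lapm_eq_lapMatrix]
  exact effRes_eq_sub_of_mulVec_eq_s13 (G.isHermitian_lapMatrix ℝ) hy

section BoxProd

variable {V W R : Type*} [Fintype V] [Fintype W] [DecidableEq V] [DecidableEq W]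
  (G : SimpleGraph V) (H : SimpleGraph W) [DecidableRel G.Adj] [DecidableRel H.Adj]
  [DecidableRel (G □ H).Adj]

theorem lapMatrix_boxProd_mulVec_apply [NonAssocRing R] (f : V × W → R) (a : V) (b : W) :
    ((G □ H).lapMatrix R *ᵥ f) (a, b) =
      (G.lapMatrix R *ᵥ fun a' => f (a', b)) a + (H.lapMatrix R *ᵥ fun b' => f (a, b')) b := by
  simp only [lapMatrix_mulVec_apply, degree_boxProd, neighborFinset_boxProd, sum_disjUnion,
    sum_product, sum_singleton]
  push_cast
  rw [add_mul]
  abel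

theorem lapMatrix_boxProd_mulVec_mul [CommRing R] {f g : V → R} {φ : W → R} {μ : R}
    (hf : G.lapMatrix R *ᵥ f + μ • f = g) (hφ : H.lapMatrix R *ᵥ φ = μ • φ) :
    (G □ H).lapMatrix R *ᵥ (fun p => f p.1 * φ p.2) = fun p => g p.1 * φ p.2 := by
  subst hf
  funext ⟨a, b⟩
  have hG : (fun a' => f a' * φ b) = φ b • f := by
    ext
    exact mul_comm _ _
  have hH : (fun b' => f a * φ b') = f a • φ := rfl
  rw [lapMatrix_boxProd_mulVec_apply, hG, hH, mulVec_smul, mulVec_smul, hφ]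
  simp only [Pi.add_apply, Pi.smul_apply, smul_eq_mul]
  ring

end BoxProd

theorem cycleGraph_lapMatrix_mulVec_apply {R : Type*} [NonAssocRing R] (n : ℕ)
    (f : Fin (n + 3) → R) (b : Fin (n + 3)) :
    ((cycleGraph (n + 3)).lapMatrix R *ᵥ f) b = 2 * f b - f (b - 1) - f (b + 1) := by
  have hne : b - 1 ≠ b + 1 := by
    intro h
    have h2 := cycleGraph_degree_three_le (v := b)
    rw [cycleGraph_degree_two_le, h, insert_eq_self.mpr (mem_singleton_self _),
      card_singleton] at h2
    omega
  rw [lapMatrix_mulVec_apply, cycleGraph_degree_three_le, cycleGraph_neighborFinset, sum_pair hne]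
  push_cast
  abel

theorem cycleGraph_four_lapMatrix_mulVec_cos :
    (cycleGraph 4).lapMatrix ℝ *ᵥ ![1, 0, -1, 0] = (2 : ℝ) • ![1, 0, -1, 0] := by
  ext b
  rw [cycleGraph_lapMatrix_mulVec_apply 1]
  fin_cases b <;> simp

theorem cycleGraph_four_lapMatrix_mulVec_alt :
    (cycleGraph 4).lapMatrix ℝ *ᵥ ![1, -1, 1, -1] = (4 : ℝ) • ![1, -1, 1, -1] := by
  ext b
  rw [cycleGraph_lapMatrix_mulVec_apply 1]
  fin_cases b <;> simp <;> norm_num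

/-- Extending `f` to `ℤ`, the path Laplacian is the second difference everywhere, corrected at
the two ends by the values at the missing neighbours `-1` and `m + 2`. -/
theorem pathGraph_lapMatrix_mulVec_of_recurrence (m : ℕ) [DecidableRel (pathGraph (m + 2)).Adj]
    {f : ℤ → ℝ} {μ : ℝ} (hf : ∀ k, f (k - 1) + f (k + 1) = (2 + μ) * f k) :
    (pathGraph (m + 2)).lapMatrix ℝ *ᵥ (fun j => f j) + μ • (fun j : Fin (m + 2) => f j) =
      (f (-1) - f 0) • Pi.single 0 1 +
        (f (m + 2) - f (m + 1)) • Pi.single (Fin.last (m + 1)) 1 := by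
  funext i
  have hi := hf i
  simp only [Pi.add_apply, Pi.smul_apply, smul_eq_mul, Pi.single_apply, Fin.ext_iff,
    Fin.val_zero, Fin.val_last, lapMatrix_mulVec_apply, degree]
  obtain h | h | ⟨h0, hm⟩ : (i : ℕ) = 0 ∨ (i : ℕ) = m + 1 ∨ ((i : ℕ) ≠ 0 ∧ (i : ℕ) ≠ m + 1) := by
    omega
  · have hN : (pathGraph (m + 2)).neighborFinset i = {⟨1, by omega⟩} := by
      ext w
      simp only [mem_neighborFinset, pathGraph_adj, mem_singleton, Fin.ext_iff]
      omega
    rw [hN, card_singleton, sum_singleton, if_pos h, if_neg (by omega)]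
    rw [h] at hi ⊢
    push_cast at hi ⊢
    linarith
  · have hN : (pathGraph (m + 2)).neighborFinset i = {⟨m, by omega⟩} := by
      ext w
      simp only [mem_neighborFinset, pathGraph_adj, mem_singleton, Fin.ext_iff]
      omega
    rw [hN, card_singleton, sum_singleton, if_neg (by omega), if_pos h]
    rw [h] at hi ⊢
    push_cast at hi ⊢
    rw [add_sub_cancel_right, add_assoc, one_add_one_eq_two] at hi
    linarith
  · have hN : (pathGraph (m + 2)).neighborFinset i = {⟨i - 1, by omega⟩, ⟨i + 1, by omega⟩} := by
      ext w
      simp only [mem_neighborFinset, pathGraph_adj, mem_insert, mem_singleton, Fin.ext_iff]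
      omega
    rw [hN, card_pair (by simp [Fin.ext_iff]), sum_pair (by simp [Fin.ext_iff]), if_neg h0,
      if_neg hm]
    push_cast [Nat.one_le_iff_ne_zero.mpr h0]
    linarith

end SimpleGraph

/-- The larger root of `x + x⁻¹ = 2 + μ`. -/
noncomputable def transferRoot (μ : ℝ) : ℝ := (2 + μ + √(μ * (μ + 4))) / 2

theorem one_lt_transferRoot {μ : ℝ} (hμ : 0 < μ) : 1 < transferRoot μ := by
  have := Real.sqrt_nonneg (μ * (μ + 4))
  rw [transferRoot]
  linarith

theorem transferRoot_add_inv {μ : ℝ} (hμ : 0 ≤ μ) :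
    transferRoot μ + (transferRoot μ)⁻¹ = 2 + μ := by
  have hsq := Real.sq_sqrt (by positivity : 0 ≤ μ * (μ + 4))
  have hpos : 0 < transferRoot μ := by
    have := Real.sqrt_nonneg (μ * (μ + 4))
    rw [transferRoot]
    linarith
  field_simp
  rw [transferRoot]
  nlinarith

section Profiles

variable {r : ℝ}

theorem zpow_sub_one_add_zpow_add_one (hr : r ≠ 0) (k : ℤ) :
    r ^ (k - 1) + r ^ (k + 1) = (r + r⁻¹) * r ^ k := by
  rw [zpow_sub_one₀ hr, zpow_add_one₀ hr]
  ring

theorem zpow_sub_sub_one_add_zpow_sub_add_one (hr : r ≠ 0) (c k : ℤ) :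
    r ^ (c - (k - 1)) + r ^ (c - (k + 1)) = (r + r⁻¹) * r ^ (c - k) := by
  rw [show c - (k - 1) = c - k + 1 by ring, show c - (k + 1) = c - k - 1 by ring, add_comm]
  exact zpow_sub_one_add_zpow_add_one hr _

/- The even and the odd solution of `f (k - 1) + f (k + 1) = (r + r⁻¹) f k` about the middle
of `0, …, m + 1`, normalised to flux `f (-1) - f 0 = 1` into the path at `0`. -/

noncomputable def coshProfile (r : ℝ) (m : ℕ) (k : ℤ) : ℝ :=
  (r ^ k + r ^ ((m + 1 : ℤ) - k)) / ((r - 1) * (r ^ (m + 1) - r⁻¹))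

noncomputable def sinhProfile (r : ℝ) (m : ℕ) (k : ℤ) : ℝ :=
  (r ^ ((m + 1 : ℤ) - k) - r ^ k) / ((r - 1) * (r ^ (m + 1) + r⁻¹))

theorem coshProfile_recurrence (hr : r ≠ 0) (m : ℕ) (k : ℤ) :
    coshProfile r m (k - 1) + coshProfile r m (k + 1) =
      (2 + (r + r⁻¹ - 2)) * coshProfile r m k := by
  rw [add_sub_cancel, coshProfile, coshProfile, coshProfile, ← add_div, mul_div_assoc']
  congr 1
  linear_combination zpow_sub_one_add_zpow_add_one hr k +
    zpow_sub_sub_one_add_zpow_sub_add_one hr (m + 1) k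

theorem sinhProfile_recurrence (hr : r ≠ 0) (m : ℕ) (k : ℤ) :
    sinhProfile r m (k - 1) + sinhProfile r m (k + 1) =
      (2 + (r + r⁻¹ - 2)) * sinhProfile r m k := by
  rw [add_sub_cancel, sinhProfile, sinhProfile, sinhProfile, ← add_div, mul_div_assoc']
  congr 1
  linear_combination zpow_sub_sub_one_add_zpow_sub_add_one hr (m + 1) k -
    zpow_sub_one_add_zpow_add_one hr k

variable (m : ℕ) [DecidableRel (pathGraph (m + 2)).Adj]

theorem pathGraph_lapMatrix_mulVec_natCast :
    (pathGraph (m + 2)).lapMatrix ℝ *ᵥ (fun j => (j : ℝ)) =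
      Pi.single (Fin.last (m + 1)) 1 - Pi.single 0 1 := by
  have h := pathGraph_lapMatrix_mulVec_of_recurrence m (f := fun k : ℤ => (k : ℝ)) (μ := 0)
    (fun k => by push_cast; ring)
  push_cast at h
  rw [zero_smul, add_zero] at h
  rw [h]
  module

theorem pathGraph_lapMatrix_mulVec_coshProfile (hr : 1 < r) :
    (pathGraph (m + 2)).lapMatrix ℝ *ᵥ (fun j => coshProfile r m j) +
        (r + r⁻¹ - 2) • (fun j : Fin (m + 2) => coshProfile r m j) =
      Pi.single 0 1 + Pi.single (Fin.last (m + 1)) 1 := by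
  have hr0 : r ≠ 0 := (zero_lt_one.trans hr).ne'
  have hflux : (r - 1) * (r ^ (m + 1) - r⁻¹) ≠ 0 := (mul_pos (by linarith)
    (by linarith [one_lt_pow₀ hr (n := m + 1) (by omega), inv_lt_one_of_one_lt₀ hr])).ne'
  have h0 : coshProfile r m (-1) - coshProfile r m 0 = 1 := by
    rw [coshProfile, coshProfile, div_sub_div_same, div_eq_iff hflux, one_mul]
    simp only [Int.reduceNeg, _root_.zpow_neg, zpow_ofNat, pow_one, sub_neg_eq_add, zpow_add₀ hr0,
      zpow_natCast, pow_zero, sub_zero]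
    field_simp
    ring
  have hl : coshProfile r m (m + 2) - coshProfile r m (m + 1) = 1 := by
    rw [coshProfile, coshProfile, div_sub_div_same, div_eq_iff hflux, one_mul]
    simp only [zpow_add₀ hr0, zpow_natCast, zpow_ofNat, add_sub_add_left_eq_sub, Int.reduceSub,
      _root_.zpow_neg, pow_one, sub_self, pow_zero]
    field_simp
    ring
  rw [pathGraph_lapMatrix_mulVec_of_recurrence m (coshProfile_recurrence hr0 m), h0, hl, one_smul,
    one_smul]

theorem pathGraph_lapMatrix_mulVec_sinhProfile (hr : 1 < r) :
    (pathGraph (m + 2)).lapMatrix ℝ *ᵥ (fun j => sinhProfile r m j) +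
        (r + r⁻¹ - 2) • (fun j : Fin (m + 2) => sinhProfile r m j) =
      Pi.single 0 1 - Pi.single (Fin.last (m + 1)) 1 := by
  have hr0 : r ≠ 0 := (zero_lt_one.trans hr).ne'
  have hflux : (r - 1) * (r ^ (m + 1) + r⁻¹) ≠ 0 :=
    (mul_pos (by linarith) (by positivity)).ne'
  have h0 : sinhProfile r m (-1) - sinhProfile r m 0 = 1 := by
    rw [sinhProfile, sinhProfile, div_sub_div_same, div_eq_iff hflux, one_mul]
    simp only [Int.reduceNeg, sub_neg_eq_add, zpow_add₀ hr0, zpow_natCast, zpow_ofNat,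
      pow_one, _root_.zpow_neg, sub_zero, pow_zero]
    field_simp
    ring
  have hl : sinhProfile r m (m + 2) - sinhProfile r m (m + 1) = -1 := by
    rw [sinhProfile, sinhProfile, div_sub_div_same, div_eq_iff hflux, neg_one_mul]
    simp only [add_sub_add_left_eq_sub, Int.reduceSub, _root_.zpow_neg, zpow_ofNat, pow_one,
      zpow_add₀ hr0, zpow_natCast, sub_self, pow_zero]
    field_simp
    ring
  rw [pathGraph_lapMatrix_mulVec_of_recurrence m (sinhProfile_recurrence hr0 m), h0, hl, one_smul,
    neg_one_smul, sub_eq_add_neg]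

end Profiles

/-- A potential of unit current from `(a₁, b₁)` to `(a_{m+2}, b₃)`. Its three terms are the
components along the eigenvectors `1`, `c = (1, 0, -1, 0)`, `t = (1, -1, 1, -1)` of `C₄`, with
coefficients read off from `e_{b₁} = (1 + 2c + t) / 4` and `e_{b₃} = (1 - 2c + t) / 4`. -/
noncomputable def blockTowerPotential (m : ℕ) (p : Fin (m + 2) × Fin 4) : ℝ :=
  (-(p.1 : ℝ) + 2 * coshProfile (transferRoot 2) m p.1 * ![1, 0, -1, 0] p.2
    + sinhProfile (transferRoot 4) m p.1 * ![1, -1, 1, -1] p.2) / 4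

theorem lapMatrix_mulVec_blockTowerPotential (m : ℕ) [DecidableRel (pathGraph (m + 2)).Adj]
    [DecidableRel (pathGraph (m + 2) □ cycleGraph 4).Adj] :
    (pathGraph (m + 2) □ cycleGraph 4).lapMatrix ℝ *ᵥ blockTowerPotential m =
      Pi.single (0, 0) 1 - Pi.single (Fin.last (m + 1), 2) 1 := by
  have scale {f g : Fin (m + 2) → ℝ} {μ : ℝ} (a : ℝ)
      (h : (pathGraph (m + 2)).lapMatrix ℝ *ᵥ f + μ • f = g) :
      (pathGraph (m + 2)).lapMatrix ℝ *ᵥ (a • f) + μ • (a • f) = a • g := by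
    rw [mulVec_smul, smul_comm μ a, ← smul_add, h]
  have hα := scale (-1 / 4) (f := fun j => (j : ℝ)) (μ := 0) <| by
    rw [zero_smul, add_zero, pathGraph_lapMatrix_mulVec_natCast]
  have hβ := scale (1 / 2) <|
    pathGraph_lapMatrix_mulVec_coshProfile m (one_lt_transferRoot two_pos)
  have hγ := scale (1 / 4) <|
    pathGraph_lapMatrix_mulVec_sinhProfile m (one_lt_transferRoot four_pos)
  rw [transferRoot_add_inv zero_le_two, add_sub_cancel_left] at hβ
  rw [transferRoot_add_inv zero_le_four, add_sub_cancel_left] at hγ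
  have hy : blockTowerPotential m =
      (fun p => ((-1 / 4 : ℝ) • fun j : Fin (m + 2) => (j : ℝ)) p.1 * 1)
      + (fun p => ((1 / 2 : ℝ) • fun j : Fin (m + 2) => coshProfile (transferRoot 2) m j) p.1
          * ![1, 0, -1, 0] p.2)
      + (fun p => ((1 / 4 : ℝ) • fun j : Fin (m + 2) => sinhProfile (transferRoot 4) m j) p.1
          * ![1, -1, 1, -1] p.2) := by
    funext p
    simp only [blockTowerPotential, Pi.add_apply, Pi.smul_apply, smul_eq_mul]
    ring
  rw [hy, mulVec_add, mulVec_add,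
    lapMatrix_boxProd_mulVec_mul _ _ hα (φ := fun _ => 1)
      (by rw [zero_smul]; exact lapMatrix_mulVec_const_eq_zero _),
    lapMatrix_boxProd_mulVec_mul _ _ hβ cycleGraph_four_lapMatrix_mulVec_cos,
    lapMatrix_boxProd_mulVec_mul _ _ hγ cycleGraph_four_lapMatrix_mulVec_alt]
  funext ⟨i, b⟩
  fin_cases b <;>
    simp only [Pi.add_apply, Pi.sub_apply, Pi.smul_apply, smul_eq_mul, Pi.single_apply,
      Prod.mk.injEq, Fin.isValue, Fin.zero_eta, Fin.mk_one, Fin.reduceFinMk, Matrix.cons_val,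
      cons_val_zero, cons_val_one, Fin.reduceEq, and_true, and_false, if_false] <;>
    split_ifs <;> norm_num

theorem resDist_blockTower (m : ℕ) :
    resDist (pathGraph (m + 2) □ cycleGraph 4) (0, 0) (Fin.last (m + 1), 2) =
      (m + 1) / 4
        + (transferRoot 2 ^ (m + 1) + 1) /
            ((transferRoot 2 - 1) * (transferRoot 2 ^ (m + 1) - (transferRoot 2)⁻¹))
        + (transferRoot 4 ^ (m + 1) - 1) /
            (2 * ((transferRoot 4 - 1) * (transferRoot 4 ^ (m + 1) + (transferRoot 4)⁻¹))) := by
  classical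
  have hr : transferRoot 2 ≠ 0 := (zero_lt_one.trans (one_lt_transferRoot two_pos)).ne'
  have hs : transferRoot 4 ≠ 0 := (zero_lt_one.trans (one_lt_transferRoot four_pos)).ne'
  rw [resDist_eq_sub_of_lapMatrix_mulVec_eq (lapMatrix_mulVec_blockTowerPotential m)]
  simp only [blockTowerPotential, coshProfile, sinhProfile]
  generalize (transferRoot 2 - 1) * (transferRoot 2 ^ (m + 1) - (transferRoot 2)⁻¹) = X
  generalize (transferRoot 4 - 1) * (transferRoot 4 ^ (m + 1) + (transferRoot 4)⁻¹) = Y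
  simp only [Fin.coe_ofNat_eq_mod, Nat.zero_mod, CharP.cast_eq_zero, neg_zero, zpow_ofNat,
    pow_zero, sub_zero, zpow_add_one₀ hr, zpow_add_one₀ hs, zpow_natCast, Nat.succ_eq_add_one,
    Nat.reduceAdd, Fin.isValue, cons_val_zero, mul_one, zero_add, Fin.val_last, Nat.cast_add,
    Nat.cast_one, neg_add_rev, sub_self, Matrix.cons_val, mul_neg]
  ring

theorem tendsto_pow_add_div_mul_pow_add {r : ℝ} (hr : 1 < r) (a b c : ℝ) :
    Tendsto (fun n : ℕ => (r ^ n + a) / (c * (r ^ n + b))) atTop (𝓝 c⁻¹) := by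
  have hX : Tendsto (fun n : ℕ => r ^ n + b) atTop atTop :=
    tendsto_atTop_add_const_right _ b (tendsto_pow_atTop_atTop_of_one_lt hr)
  have h : Tendsto (fun n : ℕ => c⁻¹ * (1 + (a - b) / (r ^ n + b))) atTop (𝓝 (c⁻¹ * (1 + 0))) :=
    (tendsto_const_nhds.add (tendsto_const_nhds.div_atTop hX)).const_mul _
  rw [add_zero, mul_one] at h
  refine h.congr' ?_
  filter_upwards [hX.eventually_gt_atTop 0] with n hn
  rw [mul_comm c, ← div_div, div_eq_inv_mul _ c]
  congr 1
  field_simp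
  ring

theorem tendsto_succ_sub_of_tendsto {G : Type*} [TopologicalSpace G] [AddCommGroup G]
    [IsTopologicalAddGroup G] {u : ℕ → G} {l : G} (h : Tendsto u atTop (𝓝 l)) :
    Tendsto (fun n => u (n + 1) - u n) atTop (𝓝 0) := by
  simpa using (h.comp (tendsto_add_atTop_nat 1)).sub h

/-- Conjecture of Evans and Francis: in the block tower graphs `G_n = P_n □ C_4`,
the successive differences of the resistance distances between `(a_1,b_1)` and
`(a_n,b_3)` tend to `1/4`. -/
theorem tendsto_resDist_blockTower :
    Filter.Tendsto (fun n : ℕ =>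
        resDist ((SimpleGraph.pathGraph (n + 2)).boxProd (SimpleGraph.cycleGraph 4))
            (⟨0, by omega⟩, 0) (Fin.last (n + 1), 2)
          - resDist ((SimpleGraph.pathGraph (n + 1)).boxProd (SimpleGraph.cycleGraph 4))
              (⟨0, by omega⟩, 0) (Fin.last n, 2))
      Filter.atTop (nhds (1 / 4)) := by
  rw [← tendsto_add_atTop_iff_nat 1]
  set r := transferRoot 2
  set s := transferRoot 4
  have h₂ := tendsto_succ_sub_of_tendsto <|
    tendsto_pow_add_div_mul_pow_add (one_lt_transferRoot two_pos) 1 (-r⁻¹) (r - 1)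
  have h₄ := tendsto_succ_sub_of_tendsto <|
    tendsto_pow_add_div_mul_pow_add (one_lt_transferRoot four_pos) (-1) s⁻¹ (2 * (s - 1))
  have h := ((tendsto_const_nhds (x := (1 / 4 : ℝ))).add h₂).add h₄
  rw [add_zero, add_zero] at h
  refine (h.comp (tendsto_add_atTop_nat 1)).congr fun m => ?_
  rw [Function.comp_apply, Fin.zero_eta, Fin.zero_eta, resDist_blockTower (m + 1),
    resDist_blockTower m]
  push_cast
  ring
end
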